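/- Let $0 < \delta \le 1/8$, $1 \le k < m/2$, let $A$ be an $m \times m$ symmetric positive semidefinite matrix, and let $\hat\Gamma$ be an $m \times m$ symmetric matrix with $\Delta = \hat\Gamma - A$. Suppose $|u^T \Delta v| \le \delta \le \frac{3}{32}\lambda_{\min}(A)$ for all unit vectors $u, v$ each supported on at most $k$ coordinates. Then for all $v \in \mathbb{R}^m$: (i) $v^T \hat\Gamma v \ge \frac{5}{8}\lambda_{\min}(A)\|v\|_2^2 - \frac{3\lambda_{\min}(A)}{8k}\|v\|_1^2$, and (ii) $v^T \hat\Gamma v \le \frac{11}{8}\lambda_{\max}(A)\|v\|_2^2 + \frac{3\lambda_{\min}(A)}{8k}\|v\|_1^2$. -/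

import Mathlib

/-!
Split `v` into consecutive blocks of its `k` largest, next `k` largest, ... entries in absolute
value. Every entry of a block is at most the average `‖previous block‖₁ / k`, so the ℓ² norm of
each block after the first is at most `‖previous block‖₁ / √k`; hence the ℓ² norms of all blocks
add up to at most `‖v‖₂ + ‖v‖₁ / √k`. Expanding `vᵀ Δ v` bilinearly over the blocks and applying
the sparse bound to each pair gives `|vᵀ Δ v| ≤ δ (‖v‖₂ + ‖v‖₁ / √k)² ≤ 2δ (‖v‖₂² + ‖v‖₁² / k)`,
and `2δ ≤ 3 λ_min / 8` turns the eigenvalue bounds for `A` into the two inequalities.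
-/

open Finset Matrix

theorem Finset.exists_subset_card_eq_forall_sdiff_le {α β : Type*} [DecidableEq α]
    [LinearOrder β] (f : α → β) {t : Finset α} {n : ℕ} (hn : n ≤ t.card) :
    ∃ S ⊆ t, S.card = n ∧ ∀ i ∈ S, ∀ j ∈ t \ S, f j ≤ f i := by
  induction n with
  | zero => exact ⟨∅, empty_subset t, rfl, by simp⟩
  | succ n ih =>
    obtain ⟨S, hSt, hScard, hStop⟩ := ih (Nat.le_of_succ_le hn)
    have hne : (t \ S).Nonempty := by
      rw [← card_pos, card_sdiff_of_subset hSt]; omega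
    obtain ⟨j₀, hj₀, hmax⟩ := exists_max_image (t \ S) f hne
    rw [mem_sdiff] at hj₀
    refine ⟨insert j₀ S, insert_subset hj₀.1 hSt,
      by rw [card_insert_of_notMem hj₀.2, hScard], fun i hi j hj => ?_⟩
    have hjS : j ∈ t \ S := by grind
    rcases mem_insert.mp hi with rfl | hiS
    · exact hmax j hjS
    · exact hStop i hiS j hjS

def IsSparse {ι M : Type*} [Zero M] (k : ℕ) (u : ι → M) : Prop :=
  ∃ T : Finset ι, T.card ≤ k ∧ ∀ i ∉ T, u i = 0

theorem IsSparse.smul {ι R M : Type*} [Zero M] [SMulZeroClass R M] {k : ℕ} {u : ι → M}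
    (hu : IsSparse k u) (c : R) : IsSparse k (c • u) := by
  obtain ⟨T, hT, hu⟩ := hu
  exact ⟨T, hT, fun i hi => by simp [hu i hi]⟩

theorem sqrt_sum_sq_le_of_abs_le {ι : Type*} {k : ℕ} {f : ι → ℝ} {S : Finset ι}
    (hS : S.card ≤ k) {B : ℝ} (hB0 : 0 ≤ B) (hB : ∀ j ∈ S, |f j| ≤ B) :
    √(∑ j ∈ S, f j ^ 2) ≤ √k * B := by
  rw [← Real.sqrt_sq hB0, ← Real.sqrt_mul (Nat.cast_nonneg k)]
  refine Real.sqrt_le_sqrt ?_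
  calc ∑ j ∈ S, f j ^ 2 ≤ ∑ _j ∈ S, B ^ 2 :=
        sum_le_sum fun j hj => sq_le_sq' (abs_le.mp (hB j hj)).1 (abs_le.mp (hB j hj)).2
    _ = S.card * B ^ 2 := by rw [sum_const, nsmul_eq_mul]
    _ ≤ k * B ^ 2 := by gcongr

section

variable {ι : Type*} [Fintype ι] {k : ℕ}

/-- `C` bounds the ℓ² norm of any `k` coordinates of `v`, in particular of the first block.
After removing the `k` largest entries `head`, the rest satisfies the same hypothesis with
`C = ‖head‖₁ / √k`, which is how the block norms telescope into `‖v‖₁ / √k`. -/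
theorem exists_sparse_decomposition_of_forall_card_le (hk : 0 < k) (t : Finset ι) :
    ∀ (v : ι → ℝ) (C : ℝ), (∀ i ∉ t, v i = 0) →
      (∀ S : Finset ι, S.card ≤ k → √(∑ j ∈ S, v j ^ 2) ≤ C) →
      ∃ (N : ℕ) (w : Fin N → ι → ℝ), ∑ i, w i = v ∧ (∀ i, IsSparse k (w i)) ∧
        ∑ i, √(∑ j, w i j ^ 2) ≤ C + (∑ j, |v j|) / √k := by
  classical
  induction t using Finset.strongInduction with
  | H t ih =>
  intro v C hvt hC
  by_cases hcard : t.card ≤ k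
  · refine ⟨1, fun _ => v, by simp, fun _ => ⟨t, hcard, hvt⟩, ?_⟩
    rw [Fin.sum_univ_one, ← sum_subset (subset_univ t) fun j _ hj => by simp [hvt j hj]]
    exact le_add_of_le_of_nonneg (hC t hcard) (by positivity)
  push Not at hcard
  obtain ⟨S, hSt, hScard, hStop⟩ :=
    exists_subset_card_eq_forall_sdiff_le (fun i => |v i|) hcard.le
  set head : ι → ℝ := fun j => if j ∈ S then v j else 0
  set tail : ι → ℝ := fun j => if j ∈ S then 0 else v j
  set s := ∑ j ∈ S, |v j|
  have hs : ∑ j, |head j| = s := by simp [head, s, apply_ite, sum_ite_mem]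
  have hl1 : ∑ j, |v j| = s + ∑ j, |tail j| := by
    rw [← hs, ← sum_add_distrib]
    exact sum_congr rfl fun j _ => by by_cases h : j ∈ S <;> simp [head, tail, h]
  have hsk_nonneg : 0 ≤ s / k := by positivity
  have htail_le (j : ι) : |tail j| ≤ s / k := by
    by_cases hjS : j ∈ S
    · simpa [tail, hjS] using hsk_nonneg
    by_cases hjt : j ∈ t
    · rw [le_div_iff₀ (by exact_mod_cast hk)]
      calc |tail j| * k = ∑ _i ∈ S, |v j| := by simp [tail, hjS, hScard, mul_comm]
        _ ≤ s := sum_le_sum fun i hi => hStop i hi j (mem_sdiff.mpr ⟨hjt, hjS⟩)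
    · simpa [tail, hjS, hvt j hjt] using hsk_nonneg
  have htail_supp (i : ι) (hi : i ∉ t \ S) : tail i = 0 := by
    by_cases hiS : i ∈ S
    · simp [tail, hiS]
    · simp [tail, hiS, hvt i (by simpa [hiS] using hi)]
  have htail_C (S' : Finset ι) (hS' : S'.card ≤ k) : √(∑ j ∈ S', tail j ^ 2) ≤ s / √k :=
    calc √(∑ j ∈ S', tail j ^ 2) ≤ √k * (s / k) :=
          sqrt_sum_sq_le_of_abs_le hS' hsk_nonneg fun j _ => htail_le j
      _ = s / √k := by
          field_simp
          rw [Real.sq_sqrt (Nat.cast_nonneg k), mul_comm]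
  have hS_nonempty : S.Nonempty := by rw [← card_pos, hScard]; exact hk
  obtain ⟨N, w, hw, hw_sparse, hw_norm⟩ :=
    ih (t \ S) (sdiff_ssubset hSt hS_nonempty) tail (s / √k) htail_supp htail_C
  refine ⟨N + 1, Fin.cons head w, ?_, ?_, ?_⟩
  · rw [Fin.sum_cons, hw]
    ext j
    by_cases h : j ∈ S <;> simp [head, tail, h]
  · exact Fin.cases ⟨S, hScard.le, fun j hj => by simp [head, hj]⟩ hw_sparse
  · have hhead : ∑ j, head j ^ 2 = ∑ j ∈ S, v j ^ 2 := by simp [head, ite_pow, sum_ite_mem]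
    rw [Fin.sum_univ_succ]
    simp only [Fin.cons_zero, Fin.cons_succ]
    rw [hhead, hl1, add_div]
    linarith [hC S hScard.le]

theorem exists_sparse_decomposition (hk : 0 < k) (v : ι → ℝ) :
    ∃ (N : ℕ) (w : Fin N → ι → ℝ), ∑ i, w i = v ∧ (∀ i, IsSparse k (w i)) ∧
      ∑ i, √(∑ j, w i j ^ 2) ≤ √(∑ j, v j ^ 2) + (∑ j, |v j|) / √k :=
  exists_sparse_decomposition_of_forall_card_le hk univ v _ (by simp) fun S _ =>
    Real.sqrt_le_sqrt (sum_le_sum_of_subset_of_nonneg (subset_univ S) fun j _ _ => sq_nonneg _)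

theorem sum_sq_pos_of_ne_zero {v : ι → ℝ} (hv : v ≠ 0) : 0 < ∑ i, v i ^ 2 := by
  refine (sum_nonneg fun i _ => sq_nonneg (v i)).lt_of_ne' ?_
  simpa [dotProduct, sq] using dotProduct_self_eq_zero.not.mpr hv

theorem sum_sq_inv_sqrt_smul_eq_one {v : ι → ℝ} (hv : v ≠ 0) :
    ∑ i, ((√(∑ j, v j ^ 2))⁻¹ • v) i ^ 2 = 1 := by
  have h := sum_sq_pos_of_ne_zero hv
  simp only [Pi.smul_apply, smul_eq_mul, mul_pow, ← mul_sum, inv_pow, Real.sq_sqrt h.le,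
    inv_mul_cancel₀ h.ne']

variable {M : Matrix ι ι ℝ} {δ : ℝ}

theorem abs_dotProduct_mulVec_le_of_isSparse
    (hM : ∀ u v : ι → ℝ, ∑ i, u i ^ 2 = 1 → ∑ i, v i ^ 2 = 1 → IsSparse k u → IsSparse k v →
      |u ⬝ᵥ M *ᵥ v| ≤ δ)
    {u v : ι → ℝ} (hu : IsSparse k u) (hv : IsSparse k v) :
    |u ⬝ᵥ M *ᵥ v| ≤ δ * √(∑ i, u i ^ 2) * √(∑ i, v i ^ 2) := by
  rcases eq_or_ne u 0 with rfl | hu0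
  · simp
  rcases eq_or_ne v 0 with rfl | hv0
  · simp
  have h := hM _ _ (sum_sq_inv_sqrt_smul_eq_one hu0) (sum_sq_inv_sqrt_smul_eq_one hv0)
    (hu.smul _) (hv.smul _)
  have ha := Real.sqrt_pos.mpr (sum_sq_pos_of_ne_zero hu0)
  have hb := Real.sqrt_pos.mpr (sum_sq_pos_of_ne_zero hv0)
  rw [mulVec_smul, dotProduct_smul, smul_dotProduct, smul_eq_mul, smul_eq_mul, abs_mul, abs_mul,
    abs_inv, abs_inv, abs_of_pos ha, abs_of_pos hb, inv_mul_le_iff₀ hb, inv_mul_le_iff₀ ha] at h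
  linarith

theorem abs_dotProduct_mulVec_self_le (hk : 0 < k) (hδ : 0 ≤ δ)
    (hM : ∀ u v : ι → ℝ, ∑ i, u i ^ 2 = 1 → ∑ i, v i ^ 2 = 1 → IsSparse k u → IsSparse k v →
      |u ⬝ᵥ M *ᵥ v| ≤ δ)
    (v : ι → ℝ) : |v ⬝ᵥ M *ᵥ v| ≤ 2 * δ * (∑ i, v i ^ 2 + (∑ i, |v i|) ^ 2 / k) := by
  obtain ⟨N, w, hw, hw_sparse, hw_norm⟩ := exists_sparse_decomposition hk v
  set norm : Fin N → ℝ := fun i => √(∑ j, w i j ^ 2)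
  calc |v ⬝ᵥ M *ᵥ v| = |∑ i, ∑ j, w i ⬝ᵥ M *ᵥ w j| := by
        rw [← hw, mulVec_sum, sum_dotProduct]
        simp_rw [dotProduct_sum]
    _ ≤ ∑ i, ∑ j, |w i ⬝ᵥ M *ᵥ w j| :=
        (abs_sum_le_sum_abs _ _).trans (sum_le_sum fun i _ => abs_sum_le_sum_abs _ _)
    _ ≤ ∑ i, ∑ j, δ * norm i * norm j := by
        gcongr with i _ j _
        exact abs_dotProduct_mulVec_le_of_isSparse hM (hw_sparse i) (hw_sparse j)
    _ = δ * (∑ i, norm i) ^ 2 := by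
        rw [sq, sum_mul_sum]
        simp only [mul_sum, mul_assoc]
    _ ≤ δ * (√(∑ i, v i ^ 2) + (∑ i, |v i|) / √k) ^ 2 := by gcongr
    _ ≤ δ * (2 * (√(∑ i, v i ^ 2) ^ 2 + ((∑ i, |v i|) / √k) ^ 2)) := by gcongr; exact add_sq_le
    _ = 2 * δ * (∑ i, v i ^ 2 + (∑ i, |v i|) ^ 2 / k) := by
        rw [Real.sq_sqrt (by positivity), div_pow, Real.sq_sqrt (Nat.cast_nonneg k)]
        ring

end

theorem lower_upper_RE_from_sparse_perturbation_general {m : ℕ} (k : ℕ) (hk : 1 ≤ k)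
    (A Ghat : Matrix (Fin m) (Fin m) ℝ)
    (lmin lmax : ℝ) (hll : lmin ≤ lmax)
    (hmin : ∀ v : Fin m → ℝ, lmin * (∑ i, v i ^ 2) ≤ v ⬝ᵥ A.mulVec v)
    (hmax : ∀ v : Fin m → ℝ, v ⬝ᵥ A.mulVec v ≤ lmax * (∑ i, v i ^ 2))
    (δ : ℝ) (hδ0 : 0 < δ) (hδmin : δ ≤ 3 / 32 * lmin)
    (hΔ : ∀ u v : Fin m → ℝ,
      (∑ i, u i ^ 2) = 1 → (∑ i, v i ^ 2) = 1 →
      (∃ T : Finset (Fin m), T.card ≤ k ∧ ∀ i ∉ T, u i = 0) →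
      (∃ T : Finset (Fin m), T.card ≤ k ∧ ∀ i ∉ T, v i = 0) →
      |u ⬝ᵥ (Ghat - A).mulVec v| ≤ δ) :
    ∀ v : Fin m → ℝ,
      (v ⬝ᵥ Ghat.mulVec v ≥
        5 / 8 * lmin * (∑ i, v i ^ 2) - 3 * lmin / (8 * k) * (∑ i, |v i|) ^ 2) ∧
      (v ⬝ᵥ Ghat.mulVec v ≤
        11 / 8 * lmax * (∑ i, v i ^ 2) + 3 * lmin / (8 * k) * (∑ i, |v i|) ^ 2) := by
  intro v
  have hΔv := abs_le.mp (abs_dotProduct_mulVec_self_le hk hδ0.le hΔ v)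
  set s := ∑ i, v i ^ 2 + (∑ i, |v i|) ^ 2 / k
  have hδs : 2 * δ * s ≤ 3 / 8 * lmin * s :=
    mul_le_mul_of_nonneg_right (by linarith) (by positivity)
  have hsplit : v ⬝ᵥ Ghat *ᵥ v = v ⬝ᵥ A *ᵥ v + v ⬝ᵥ (Ghat - A) *ᵥ v := by
    rw [sub_mulVec, dotProduct_sub]; ring
  have hrhs : 3 * lmin / (8 * k) * (∑ i, |v i|) ^ 2 = 3 / 8 * lmin * ((∑ i, |v i|) ^ 2 / k) := by
    ring
  have hlmax : lmin * ∑ i, v i ^ 2 ≤ lmax * ∑ i, v i ^ 2 := by gcongr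
  rw [hsplit, hrhs]
  constructor <;> linarith [hmin v, hmax v]

/-- Lower and Upper RE conditions for Ghat = A + Δ, where A is symmetric PSD
with eigenvalue bounds λmin, λmax, and Δ has small sparse quadratic forms. -/
theorem lower_upper_RE_from_sparse_perturbation {m : ℕ} (k : ℕ) (hk : 1 ≤ k)
    (hkm : (k : ℝ) < m / 2)
    (A Ghat : Matrix (Fin m) (Fin m) ℝ) (hA : A.PosSemidef) (hΓ : Ghat.IsSymm)
    (lmin lmax : ℝ) (hlmin0 : 0 ≤ lmin) (hll : lmin ≤ lmax)
    (hmin : ∀ v : Fin m → ℝ, lmin * (∑ i, v i ^ 2) ≤ v ⬝ᵥ A.mulVec v)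
    (hmax : ∀ v : Fin m → ℝ, v ⬝ᵥ A.mulVec v ≤ lmax * (∑ i, v i ^ 2))
    (δ : ℝ) (hδ0 : 0 < δ) (hδ1 : δ ≤ 1 / 8) (hδmin : δ ≤ 3 / 32 * lmin)
    (hΔ : ∀ u v : Fin m → ℝ,
      (∑ i, u i ^ 2) = 1 → (∑ i, v i ^ 2) = 1 →
      (∃ T : Finset (Fin m), T.card ≤ k ∧ ∀ i ∉ T, u i = 0) →
      (∃ T : Finset (Fin m), T.card ≤ k ∧ ∀ i ∉ T, v i = 0) →
      |u ⬝ᵥ (Ghat - A).mulVec v| ≤ δ) :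
    ∀ v : Fin m → ℝ,
      (v ⬝ᵥ Ghat.mulVec v ≥
        5 / 8 * lmin * (∑ i, v i ^ 2) - 3 * lmin / (8 * k) * (∑ i, |v i|) ^ 2) ∧
      (v ⬝ᵥ Ghat.mulVec v ≤
        11 / 8 * lmax * (∑ i, v i ^ 2) + 3 * lmin / (8 * k) * (∑ i, |v i|) ^ 2) :=
  lower_upper_RE_from_sparse_perturbation_general k hk A Ghat lmin lmax hll hmin hmax δ hδ0 hδmin hΔ
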